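/- Let G be an abelian group, G₀ ⊆ G \ {0} non-empty, and H = B±(G₀). If Δ(H) ≠ ∅, then min Δ(H) divides d := gcd{|A| − 2 : A an atom of H}, and d divides 2·min Δ(H). In particular, if d is odd, then min Δ(H) = d. -/

import Mathlib

open Multiset

variable {G : Type*} [AddCommGroup G]

/-- `S` is a plus-minus weighted zero-sum sequence: `S` splits as `S₁ + S₂` with
`S₁.sum = S₂.sum`, i.e. some choice of signs `ε_i ∈ {+1, -1}` makes the weighted sum vanish. -/
def IsPMZeroSum (S : Multiset G) : Prop :=
  ∃ S₁ S₂ : Multiset G, S = S₁ + S₂ ∧ S₁.sum = S₂.sum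

/-- The monoid `B±(G₀)` of plus-minus weighted zero-sum sequences over `G₀ ⊆ G`, as an
additive submonoid of the free commutative monoid `Multiset G` of sequences over `G`. -/
def PMZS (G₀ : Set G) : AddSubmonoid (Multiset G) where
  carrier := {S | (∀ g ∈ S, g ∈ G₀) ∧ IsPMZeroSum S}
  zero_mem' := ⟨fun g hg => absurd hg (Multiset.notMem_zero g), 0, 0, by simp, rfl⟩
  add_mem' := by
    rintro S T ⟨hS, S₁, S₂, rfl, h12⟩ ⟨hT, T₁, T₂, rfl, h34⟩
    exact ⟨fun g hg => (Multiset.mem_add.mp hg).elim (fun h => hS g h) (fun h => hT g h),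
      S₁ + T₁, S₂ + T₂, add_add_add_comm S₁ S₂ T₁ T₂, by simp [h12, h34]⟩

/-- `A` is an atom (irreducible element) of the submonoid `H` of `Multiset G`. -/
def IsPMAtom (H : AddSubmonoid (Multiset G)) (A : Multiset G) : Prop :=
  A ∈ H ∧ A ≠ 0 ∧ ∀ B C : Multiset G, B ∈ H → C ∈ H → A = B + C → B = 0 ∨ C = 0

/-- The set of lengths `L(a)` of `a` in `H`: all `k` such that `a` is a sum of `k` atoms of `H`. -/
def LengthSet (H : AddSubmonoid (Multiset G)) (a : Multiset G) : Set ℕ :=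
  {k | ∃ l : List (Multiset G), (∀ A ∈ l, IsPMAtom H A) ∧ l.sum = a ∧ l.length = k}

/-- The set of successive distances `Δ(L)` of a set `L ⊆ ℕ`. -/
def DistSet (L : Set ℕ) : Set ℕ :=
  {d | 0 < d ∧ ∃ a ∈ L, a + d ∈ L ∧ ∀ b ∈ L, a < b → a + d ≤ b}

/-- The set of distances `Δ(H) = ⋃_{a ∈ H} Δ(L(a))`. -/
def DeltaM (H : AddSubmonoid (Multiset G)) : Set ℕ :=
  {d | ∃ a ∈ H, d ∈ DistSet (LengthSet H a)}

/-- `a` divides `b` in `H`. -/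
def DvdIn (H : AddSubmonoid (Multiset G)) (a b : Multiset G) : Prop :=
  ∃ c ∈ H, b = a + c

/-- `S` is a divisor-closed submonoid of `H`. -/
def IsDivClosed (H S : AddSubmonoid (Multiset G)) : Prop :=
  S ≤ H ∧ ∀ s ∈ S, ∀ a ∈ H, DvdIn H a s → a ∈ S

/-- The set of minimal distances
`Δ*(H) = {min Δ(S) : S a divisor-closed submonoid of H with Δ(S) ≠ ∅}`. -/
def DeltaStar (H : AddSubmonoid (Multiset G)) : Set ℕ :=
  {d | ∃ S : AddSubmonoid (Multiset G), IsDivClosed H S ∧ (DeltaM S).Nonempty ∧ d = sInf (DeltaM S)}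

/-- The set of lengths of atoms of `H`. -/
def AtomLengths (H : AddSubmonoid (Multiset G)) : Set ℕ :=
  {n | ∃ A : Multiset G, IsPMAtom H A ∧ Multiset.card A = n}

/-- The Davenport constant `D(H)` of `H`: the supremum of the lengths of the atoms of `H`.  -/
noncomputable def DavD (H : AddSubmonoid (Multiset G)) : ℕ :=
  sSup (AtomLengths H)

/-- The system of sets of lengths `L(H)` of `H`. -/
def LSys (H : AddSubmonoid (Multiset G)) : Set (Set ℕ) :=
  {L | ∃ a ∈ H, L = LengthSet H a}

/-- `d` is the greatest common divisor of the set `S` of integers. -/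
def IsSetGCD (S : Set ℤ) (d : ℕ) : Prop :=
  (∀ x ∈ S, (d : ℤ) ∣ x) ∧ ∀ c : ℕ, (∀ x ∈ S, (c : ℤ) ∣ x) → c ∣ d

/-- A family `e` of elements of an abelian group is independent if `∑ c i • e i = 0`
with integer coefficients implies `c i • e i = 0` for each `i`. -/
def IsIndepFamily {k : ℕ} (e : Fin k → G) : Prop :=
  ∀ c : Fin k → ℤ, ∑ i, c i • e i = 0 → ∀ i, c i • e i = 0

/-- The (classical) Davenport constant of the abelian group `G`: the smallest `ℓ` such that
every sequence over `G` of length at least `ℓ` has a nonempty zero-sum subsequence. -/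
noncomputable def DavenportGroup (G : Type*) [AddCommGroup G] : ℕ :=
  sInf {ℓ | ∀ S : Multiset G, ℓ ≤ Multiset.card S → ∃ T, T ≤ S ∧ T ≠ 0 ∧ T.sum = 0}

/-! Write `m = min Δ(H)`. Lengths add along products, so `m` divides every distance of `Δ(H)`
and hence every difference of two lengths of one element. For an atom `A` of `B±(G₀)`, `A + A`
is both a product of two atoms and of `|A|` atoms `g g` (`g ∈ A`), so `m ∣ |A| - 2`, i.e.
`m ∣ d`. Conversely, every factorization of `a` into `k` atoms gives `|a| ≡ 2k (mod d)`; applied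
to two lengths `k` and `k + m` of one element this yields `d ∣ 2m`. -/

section LengthSet

variable {α : Type*} {H : AddSubmonoid (Multiset α)}

lemma add_mem_lengthSet_add {a b : Multiset α} {x y : ℕ}
    (hx : x ∈ LengthSet H a) (hy : y ∈ LengthSet H b) : x + y ∈ LengthSet H (a + b) := by
  obtain ⟨l, hl, rfl, rfl⟩ := hx
  obtain ⟨l', hl', rfl, rfl⟩ := hy
  exact ⟨l ++ l', fun A hA => (List.mem_append.mp hA).elim (hl A) (hl' A), List.sum_append,
    List.length_append⟩

lemma mul_mem_lengthSet_nsmul {a : Multiset α} {x : ℕ} (hx : x ∈ LengthSet H a) (q : ℕ) :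
    q * x ∈ LengthSet H (q • a) := by
  induction q with
  | zero => exact ⟨[], by simp, by simp, by simp⟩
  | succ q ih => simpa only [succ_nsmul, Nat.succ_mul] using add_mem_lengthSet_add ih hx

lemma exists_mem_distSet_of_lt {L : Set ℕ} {u w : ℕ} (hu : u ∈ L) (hw : w ∈ L) (huw : u < w) :
    ∃ g ∈ DistSet L, g ≤ w - u ∧ u + g ∈ L := by
  set T := {z | z ∈ L ∧ u < z}
  have hv : sInf T ∈ T := Nat.sInf_mem ⟨w, hw, huw⟩
  have hle : sInf T ≤ w := Nat.sInf_le ⟨hw, huw⟩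
  have hnext : u + (sInf T - u) = sInf T := Nat.add_sub_cancel' hv.2.le
  refine ⟨sInf T - u, ⟨Nat.sub_pos_of_lt hv.2, u, hu, ?_, fun b hb hub => ?_⟩, by omega, ?_⟩
  all_goals rw [hnext]
  exacts [hv.1, Nat.sInf_le ⟨hb, hub⟩, hv.1]

/-- If `m = min Δ(H)` did not divide `δ = q m + r ∈ Δ(H)`, realised by lengths `x, x + m` of `a`
and `y, y + δ` of `b`, then `q • a + b` would have the lengths `q (x + m) + y` and `q x + y + δ`
at distance `r < m`. -/
lemma sInf_deltaM_dvd_of_mem (hΔ : (DeltaM H).Nonempty) {δ : ℕ} (hδ : δ ∈ DeltaM H) :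
    sInf (DeltaM H) ∣ δ := by
  set m := sInf (DeltaM H)
  obtain ⟨a, ha, hmpos, x, hx, hxm, -⟩ : m ∈ DeltaM H := Nat.sInf_mem hΔ
  obtain ⟨b, hb, -, y, hy, hyδ, -⟩ := hδ
  by_contra hndvd
  have hr : 0 < δ % m := Nat.pos_of_ne_zero (mt Nat.dvd_of_mod_eq_zero hndvd)
  have hrm : δ % m < m := Nat.mod_lt _ hmpos
  have hqr : m * (δ / m) + δ % m = δ := Nat.div_add_mod δ m
  generalize δ / m = q, δ % m = r at *
  have h₀ := add_mem_lengthSet_add (mul_mem_lengthSet_nsmul hxm q) hy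
  have h₁ := add_mem_lengthSet_add (mul_mem_lengthSet_nsmul hx q) hyδ
  have hdist : q * (x + m) + y + r = q * x + (y + δ) := by rw [← hqr]; ring
  obtain ⟨g, hg, hgle, -⟩ := exists_mem_distSet_of_lt h₀ h₁ (by omega)
  have hmg : m ≤ g := Nat.sInf_le ⟨_, add_mem (AddSubmonoid.nsmul_mem H ha _) hb, hg⟩
  omega

lemma sInf_deltaM_dvd_sub_of_mem_lengthSet (hΔ : (DeltaM H).Nonempty) {a : Multiset α}
    (ha : a ∈ H) {u w : ℕ} (hu : u ∈ LengthSet H a) (hw : w ∈ LengthSet H a) :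
    sInf (DeltaM H) ∣ w - u := by
  induction h : w - u using Nat.strong_induction_on generalizing u with
  | _ n ih =>
    rcases Nat.eq_zero_or_pos n with rfl | hpos
    · exact dvd_zero _
    obtain ⟨g, hg, hgle, hug⟩ := exists_mem_distSet_of_lt hu hw (by omega)
    have hsplit : n = g + (w - (u + g)) := by omega
    rw [hsplit]
    exact dvd_add (sInf_deltaM_dvd_of_mem hΔ ⟨a, ha, hg⟩)
      (ih _ (by have := hg.1; omega) hug rfl)

lemma dvd_card_sub_two_mul_of_mem_lengthSet {d : ℕ}
    (hd : ∀ A, IsPMAtom H A → (d : ℤ) ∣ (card A : ℤ) - 2)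
    {a : Multiset α} {k : ℕ} (hk : k ∈ LengthSet H a) :
    (d : ℤ) ∣ (card a : ℤ) - 2 * k := by
  obtain ⟨l, hl, rfl, rfl⟩ := hk
  induction l with
  | nil => simp
  | cons A l ih =>
    have hsplit : (card (A :: l).sum : ℤ) - 2 * (A :: l).length =
        ((card A : ℤ) - 2) + ((card l.sum : ℤ) - 2 * l.length) := by
      rw [List.sum_cons, card_add, List.length_cons]
      push_cast
      ring
    rw [hsplit]
    exact dvd_add (hd A (hl A List.mem_cons_self))
      (ih fun B hB => hl B (List.mem_cons_of_mem _ hB))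

end LengthSet

section PMZS

variable {G₀ : Set G}

lemma singleton_notMem_PMZS (h0 : (0 : G) ∉ G₀) (b : G) : {b} ∉ PMZS G₀ := by
  rintro ⟨hb, S₁, S₂, hS, hsum⟩
  have hb0 : b ≠ 0 := fun h => h0 (h ▸ hb b (mem_singleton_self b))
  have hcard : card S₁ + card S₂ = 1 := by rw [← card_add, ← hS, card_singleton]
  have : S₁ = 0 ∨ S₂ = 0 := by
    rcases Nat.eq_zero_or_pos (card S₁) with h | h
    · exact .inl (card_eq_zero.mp h)
    · exact .inr (card_eq_zero.mp (by omega))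
  rcases this with rfl | rfl
  · rw [zero_add] at hS
    subst hS
    exact hb0 (by simpa using hsum.symm)
  · rw [add_zero] at hS
    subst hS
    exact hb0 (by simpa using hsum)

lemma two_le_card_of_isPMAtom (h0 : (0 : G) ∉ G₀) {A : Multiset G}
    (hA : IsPMAtom (PMZS G₀) A) : 2 ≤ card A := by
  obtain ⟨hAH, hA0, -⟩ := hA
  by_contra h
  interval_cases hc : card A
  · exact hA0 (card_eq_zero.mp hc)
  · obtain ⟨b, rfl⟩ := card_eq_one.mp hc
    exact singleton_notMem_PMZS h0 b hAH

lemma isPMAtom_pair (h0 : (0 : G) ∉ G₀) {g : G} (hg : g ∈ G₀) : IsPMAtom (PMZS G₀) {g, g} := by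
  refine ⟨⟨by simp [hg], {g}, {g}, rfl, rfl⟩, by simp, fun B C hB hC hBC => ?_⟩
  by_contra! h
  have hcard : card B + card C = 2 := by rw [← card_add, ← hBC]; rfl
  have hB1 : card B = 1 := by
    have := card_pos.mpr h.1
    have := card_pos.mpr h.2
    omega
  obtain ⟨b, rfl⟩ := card_eq_one.mp hB1
  exact singleton_notMem_PMZS h0 b hB

lemma card_mem_lengthSet_add_self (h0 : (0 : G) ∉ G₀) {A : Multiset G} (hA : ∀ g ∈ A, g ∈ G₀) :
    card A ∈ LengthSet (PMZS G₀) (A + A) := by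
  induction A using Multiset.induction_on with
  | empty => exact ⟨[], by simp, by simp, by simp⟩
  | cons g A ih =>
    obtain ⟨l, hl, hsum, hlen⟩ := ih fun x hx => hA x (mem_cons_of_mem hx)
    refine ⟨{g, g} :: l, ?_, ?_, by simp [hlen]⟩
    · intro B hB
      rcases List.mem_cons.mp hB with rfl | hB
      · exact isPMAtom_pair h0 (hA g (mem_cons_self _ _))
      · exact hl B hB
    · rw [List.sum_cons, hsum, ← singleton_add, insert_eq_cons, ← singleton_add]
      abel

lemma sInf_deltaM_dvd_card_sub_two (h0 : (0 : G) ∉ G₀) (hΔ : (DeltaM (PMZS G₀)).Nonempty)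
    {A : Multiset G} (hA : IsPMAtom (PMZS G₀) A) :
    ((sInf (DeltaM (PMZS G₀)) : ℕ) : ℤ) ∣ (card A : ℤ) - 2 := by
  have h2 : 2 ∈ LengthSet (PMZS G₀) (A + A) := ⟨[A, A], by simp [hA], by simp, rfl⟩
  have hdvd := sInf_deltaM_dvd_sub_of_mem_lengthSet hΔ (add_mem hA.1 hA.1) h2
    (card_mem_lengthSet_add_self h0 hA.1.1)
  rw [← Nat.cast_ofNat, ← Nat.cast_sub (two_le_card_of_isPMAtom h0 hA)]
  exact Int.natCast_dvd_natCast.mpr hdvd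

end PMZS

theorem stmt_4_general (G : Type*) [AddCommGroup G] (G₀ : Set G) (h0 : (0 : G) ∉ G₀)
    (hΔ : (DeltaM (PMZS G₀)).Nonempty) (d : ℕ)
    (hd : IsSetGCD {x : ℤ | ∃ A : Multiset G,
        IsPMAtom (PMZS G₀) A ∧ x = (Multiset.card A : ℤ) - 2} d) :
    sInf (DeltaM (PMZS G₀)) ∣ d ∧ d ∣ 2 * sInf (DeltaM (PMZS G₀)) ∧
      (Odd d → sInf (DeltaM (PMZS G₀)) = d) := by
  set m := sInf (DeltaM (PMZS G₀))
  have hmd : m ∣ d := hd.2 m fun _ ⟨A, hA, hx⟩ => hx ▸ sInf_deltaM_dvd_card_sub_two h0 hΔ hA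
  obtain ⟨a, -, -, k, hk, hkm, -⟩ : m ∈ DeltaM (PMZS G₀) := Nat.sInf_mem hΔ
  have hatoms : ∀ A, IsPMAtom (PMZS G₀) A → (d : ℤ) ∣ (card A : ℤ) - 2 :=
    fun A hA => hd.1 _ ⟨A, hA, rfl⟩
  have hdm : d ∣ 2 * m := by
    have hdiff : ((card a : ℤ) - 2 * k) - (card a - 2 * ↑(k + m)) = 2 * m := by push_cast; ring
    exact_mod_cast hdiff ▸ dvd_sub (dvd_card_sub_two_mul_of_mem_lengthSet hatoms hk)
      (dvd_card_sub_two_mul_of_mem_lengthSet hatoms hkm)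
  exact ⟨hmd, hdm, fun hodd =>
    hmd.antisymm ((Nat.coprime_two_right.mpr hodd).dvd_of_dvd_mul_left hdm)⟩

/-- For `G₀ ⊆ G \ {0}` nonempty, `H = B±(G₀)` with `Δ(H) ≠ ∅`, and
`d = gcd {|A| - 2 : A atom of H}`: `min Δ(H) ∣ d`, `d ∣ 2 · min Δ(H)`, and if `d` is odd
then `min Δ(H) = d`. -/
theorem stmt_4 (G : Type*) [AddCommGroup G] (G₀ : Set G) (h0 : (0 : G) ∉ G₀)
    (hne : G₀.Nonempty) (hΔ : (DeltaM (PMZS G₀)).Nonempty) (d : ℕ)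
    (hd : IsSetGCD {x : ℤ | ∃ A : Multiset G,
        IsPMAtom (PMZS G₀) A ∧ x = (Multiset.card A : ℤ) - 2} d) :
    sInf (DeltaM (PMZS G₀)) ∣ d ∧ d ∣ 2 * sInf (DeltaM (PMZS G₀)) ∧
      (Odd d → sInf (DeltaM (PMZS G₀)) = d) :=
  stmt_4_general G G₀ h0 hΔ d hd
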